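/- arXiv:1703.04901 — 4 statements merged into one kernel-verified Lean document; each statement's English description precedes it below -/
import Mathlib

section
/- The map F_c : Δ_n → Δ_n is continuous on all of Δ_n (in particular it is continuous at each vertex e_i, where F_c(e_i) = e_i). -/
open scoped Classical BigOperators

/-- The standard simplex Δₙ in ℝⁿ. -/
def DFsimplex (n : ℕ) : Set (Fin n → ℝ) :=
  {x | (∀ i, 0 ≤ x i) ∧ ∑ i, x i = 1}

/-- Δ̃ₙ : the simplex with its vertices removed, i.e. points of Δₙ with all coordinates < 1. -/
def DFsimplexTilde (n : ℕ) : Set (Fin n → ℝ) :=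
  {x | x ∈ DFsimplex n ∧ ∀ i, x i < 1}

/-- int(Δₙ) : points of Δₙ with all coordinates > 0. -/
def DFsimplexInt (n : ℕ) : Set (Fin n → ℝ) :=
  {x | x ∈ DFsimplex n ∧ ∀ i, 0 < x i}

/-- αᶜ(x) = (∑ⱼ cⱼ/(1-xⱼ))⁻¹. -/
noncomputable def DFalpha {n : ℕ} (c x : Fin n → ℝ) : ℝ :=
  (∑ j, c j / (1 - x j))⁻¹

/-- The DeGroot–Friedkin map Fᶜ : fixes the vertices eᵢ, and elsewhere
Fᶜ(x)ᵢ = αᶜ(x)·cᵢ/(1-xᵢ). -/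
noncomputable def DFmap {n : ℕ} (c : Fin n → ℝ) (x : Fin n → ℝ) : Fin n → ℝ :=
  if ∃ i, x = Pi.single i 1 then x
  else fun i => DFalpha c x * (c i / (1 - x i))

/-!
Off the vertices, `F_c` is a rational map whose denominators `1 - x_j` and `∑ c_j / (1 - x_j)`
do not vanish, hence continuous. Near a vertex `e_k`, the single term `c_k / (1 - x_k)` already
gives `α_c(x) ≤ (1 - x_k) / c_k`, while `x_i ≤ 1 - x_k < 1/2` for `i ≠ k`; so
`F_c(x)_i ≤ 2 c_i (1 - x_k) / c_k → 0`. As `F_c(x)` stays in `Δ_n`, also `F_c(x)_k → 1`.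
-/

open Filter Topology Finset

section StdSimplex

variable {ι : Type*} [Fintype ι] {x : ι → ℝ}

lemma add_le_one_of_mem_stdSimplex (hx : x ∈ stdSimplex ℝ ι) {i j : ι} (hij : i ≠ j) :
    x i + x j ≤ 1 := by
  classical
  rw [← Finset.sum_pair hij, ← hx.2]
  exact Finset.sum_le_univ_sum_of_nonneg hx.1

lemma eq_single_of_mem_stdSimplex [DecidableEq ι] (hx : x ∈ stdSimplex ℝ ι) {k : ι}
    (hk : x k = 1) : x = Pi.single k 1 := by
  funext j
  rcases eq_or_ne j k with rfl | hjk
  · simp [hk]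
  · have := add_le_one_of_mem_stdSimplex hx hjk
    simp only [Pi.single_apply, hjk, if_false]
    linarith [hx.1 j]

lemma forall_lt_one_or_eq_single_of_mem_stdSimplex [DecidableEq ι] (hx : x ∈ stdSimplex ℝ ι) :
    (∀ i, x i < 1) ∨ ∃ k, x = Pi.single k 1 := by
  by_contra! h
  obtain ⟨⟨k, hk⟩, hv⟩ := h
  exact hv k (eq_single_of_mem_stdSimplex hx (le_antisymm (mem_Icc_of_mem_stdSimplex hx k).2 hk))

lemma tendsto_single_of_mem_stdSimplex [DecidableEq ι] {α : Type*} {l : Filter α}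
    {f : α → ι → ℝ} (hf : ∀ᶠ a in l, f a ∈ stdSimplex ℝ ι) (k : ι)
    (h : ∀ i ≠ k, Tendsto (fun a => f a i) l (𝓝 0)) :
    Tendsto f l (𝓝 (Pi.single k 1)) := by
  refine tendsto_pi_nhds.2 fun i => ?_
  rcases eq_or_ne i k with rfl | hik
  · have hrest : Tendsto (fun a => ∑ j ∈ univ.erase i, f a j) l (𝓝 0) := by
      have := tendsto_finsetSum (univ.erase i) fun j hj => h j (Finset.ne_of_mem_erase hj)
      rwa [Finset.sum_const_zero] at this
    have hk : Tendsto (fun a => 1 - ∑ j ∈ univ.erase i, f a j) l (𝓝 1) := by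
      simpa using (tendsto_const_nhds (x := (1 : ℝ))).sub hrest
    rw [Pi.single_eq_same]
    refine hk.congr' (hf.mono fun a ha => ?_)
    rw [← ha.2, ← Finset.add_sum_erase _ _ (mem_univ i), add_sub_cancel_right]
  · simpa [Pi.single_apply, hik] using h i hik

end StdSimplex

section DeGrootFriedkin

variable {n : ℕ} {c x : Fin n → ℝ}

lemma DFmap_single (c : Fin n → ℝ) (k : Fin n) : DFmap c (Pi.single k 1) = Pi.single k 1 :=
  if_pos ⟨k, rfl⟩

lemma DFmap_of_forall_lt_one (hx : ∀ i, x i < 1) :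
    DFmap c x = fun i => DFalpha c x * (c i / (1 - x i)) :=
  if_neg <| by rintro ⟨i, rfl⟩; simpa using hx i

lemma sum_div_one_sub_pos (hc : ∀ i, 0 < c i) (hx : x ∈ DFsimplexTilde n) :
    0 < ∑ j, c j / (1 - x j) :=
  Finset.sum_pos (fun j _ => div_pos (hc j) (sub_pos.2 (hx.2 j)))
    (Finset.nonempty_of_sum_ne_zero (hx.1.2.symm ▸ one_ne_zero))

lemma DFalpha_le (hc : ∀ i, 0 < c i) (hx : ∀ i, x i < 1) (k : Fin n) :
    DFalpha c x ≤ (1 - x k) / c k := by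
  rw [DFalpha, ← inv_div]
  exact inv_anti₀ (div_pos (hc k) (sub_pos.2 (hx k)))
    (Finset.single_le_sum (fun j _ => (div_pos (hc j) (sub_pos.2 (hx j))).le) (mem_univ k))

lemma DFmap_mem_DFsimplex (hc : ∀ i, 0 < c i) (hx : x ∈ DFsimplex n) :
    DFmap c x ∈ DFsimplex n := by
  rcases forall_lt_one_or_eq_single_of_mem_stdSimplex hx with hlt | ⟨k, rfl⟩
  · have hS := sum_div_one_sub_pos hc ⟨hx, hlt⟩
    rw [DFmap_of_forall_lt_one hlt]
    refine ⟨fun i => mul_nonneg (inv_pos.2 hS).le (div_pos (hc i) (sub_pos.2 (hlt i))).le, ?_⟩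
    rw [← Finset.mul_sum]
    exact inv_mul_cancel₀ hS.ne'
  · rw [DFmap_single]
    exact single_mem_stdSimplex ℝ k

lemma continuousAt_DFmap (hc : ∀ i, 0 < c i) (hx : x ∈ DFsimplexTilde n) :
    ContinuousAt (DFmap c) x := by
  have hnear : ∀ᶠ y in 𝓝 x, ∀ i, y i < 1 :=
    eventually_all.2 fun i => (continuous_apply i).continuousAt.eventually (gt_mem_nhds (hx.2 i))
  refine ContinuousAt.congr ?_ (hnear.mono fun y hy => (DFmap_of_forall_lt_one hy).symm)
  have hsub : ∀ j, ContinuousAt (fun y : Fin n → ℝ => c j / (1 - y j)) x := fun j =>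
    continuousAt_const.div (continuousAt_const.sub (continuous_apply j).continuousAt)
      (sub_pos.2 (hx.2 j)).ne'
  have hsum : ContinuousAt (fun y : Fin n → ℝ => ∑ j, c j / (1 - y j)) x :=
    tendsto_finsetSum _ fun j _ => hsub j
  exact continuousAt_pi.2 fun i => (hsum.inv₀ (sum_div_one_sub_pos hc hx).ne').mul (hsub i)

lemma DFmap_apply_le (hc : ∀ i, 0 < c i) (hx : x ∈ DFsimplex n) {i k : Fin n}
    (hk : 1 / 2 < x k) (hik : i ≠ k) :
    DFmap c x i ≤ (1 - x k) / c k * (2 * c i) := by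
  rcases forall_lt_one_or_eq_single_of_mem_stdSimplex hx with hlt | ⟨j, rfl⟩
  · have hxi : 1 / 2 < 1 - x i := by linarith [add_le_one_of_mem_stdSimplex hx hik]
    have hterm : c i / (1 - x i) ≤ 2 * c i := by
      rw [div_le_iff₀ (by linarith)]
      nlinarith [hc i]
    rw [DFmap_of_forall_lt_one hlt]
    exact mul_le_mul (DFalpha_le hc hlt k) hterm (div_pos (hc i) (by linarith)).le
      (div_nonneg (sub_pos.2 (hlt k)).le (hc k).le)
  · obtain rfl : j = k := by
      by_contra hjk
      rw [Pi.single_eq_of_ne (Ne.symm hjk)] at hk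
      norm_num at hk
    simp [DFmap_single, hik]

lemma continuousWithinAt_DFmap_single (hc : ∀ i, 0 < c i) (k : Fin n) :
    ContinuousWithinAt (DFmap c) (DFsimplex n) (Pi.single k 1) := by
  rw [ContinuousWithinAt, DFmap_single]
  have hnear : ∀ᶠ x in 𝓝[DFsimplex n] Pi.single k 1, x ∈ DFsimplex n ∧ 1 / 2 < x k :=
    Filter.Eventually.and self_mem_nhdsWithin <| nhdsWithin_le_nhds <|
      (continuous_apply k).continuousAt.eventually (lt_mem_nhds (by norm_num))
  refine tendsto_single_of_mem_stdSimplex (hnear.mono fun x hx => DFmap_mem_DFsimplex hc hx.1) k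
    fun i hik => ?_
  have hbound : Tendsto (fun x : Fin n → ℝ => (1 - x k) / c k * (2 * c i))
      (𝓝[DFsimplex n] Pi.single k 1) (𝓝 0) := by
    have : Continuous fun x : Fin n → ℝ => (1 - x k) / c k * (2 * c i) := by fun_prop
    simpa using (this.tendsto (Pi.single k 1)).mono_left nhdsWithin_le_nhds
  exact tendsto_of_tendsto_of_tendsto_of_le_of_le' tendsto_const_nhds hbound
    (hnear.mono fun x hx => (DFmap_mem_DFsimplex hc hx.1).1 i)
    (hnear.mono fun x hx => DFmap_apply_le hc hx.1 hx.2 hik)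

end DeGrootFriedkin

theorem stmt_3_general (n : ℕ) (c : Fin n → ℝ)
    (hc : ∀ i, 0 < c i) :
    Set.MapsTo (DFmap c) (DFsimplex n) (DFsimplex n) ∧
    ContinuousOn (DFmap c) (DFsimplex n) := by
  refine ⟨fun x hx => DFmap_mem_DFsimplex hc hx, fun x hx => ?_⟩
  rcases forall_lt_one_or_eq_single_of_mem_stdSimplex hx with hlt | ⟨k, rfl⟩
  · exact (continuousAt_DFmap hc ⟨hx, hlt⟩).continuousWithinAt
  · exact continuousWithinAt_DFmap_single hc k

/-- Fᶜ : Δₙ → Δₙ is continuous on all of Δₙ (in particular at each vertex eᵢ,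
where Fᶜ(eᵢ) = eᵢ). -/
theorem stmt_3 (n : ℕ) (hn : 3 ≤ n) (c : Fin n → ℝ)
    (hc : ∀ i, 0 < c i) (hcsum : ∑ i, c i = 1) :
    Set.MapsTo (DFmap c) (DFsimplex n) (DFsimplex n) ∧
    ContinuousOn (DFmap c) (DFsimplex n) :=
  stmt_3_general n c hc
end

section
/- Suppose in addition that c_i < 1/2 for all i. Then there exists r ∈ (0,1) such that the compact convex set A_r = {x ∈ Δ_n : x_i ≤ 1 − r for all i} satisfies F_c(A_r) ⊆ A_r; in fact F_c(x)_i < 1 − r for every x ∈ A_r and every i. -/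
open scoped Classical BigOperators

/-! Off the vertices, `F_c(x)_i = t_i / ∑ j, t_j` with `t_j = c_j / (1 - x_j) ≥ c_j`. If every
`x_j ≤ 1 - r`, then `r t_i ≤ c_i` while the other terms add up to at least `1 - c_i`, so
`F_c(x)_i < 1 - r` as soon as `c_i < (1 - r)(1 - c_i)`. At `r = 0` this is `c_i < 1/2`, hence it
persists for all small `r > 0`. -/

section

variable {n : ℕ} {c x : Fin n → ℝ}

theorem DFmap_apply_of_forall_lt_one (hx : ∀ i, x i < 1) (i : Fin n) :
    DFmap c x i = c i / (1 - x i) / ∑ j, c j / (1 - x j) := by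
  have hvertex : ¬ ∃ k, x = Pi.single k 1 := by
    rintro ⟨k, rfl⟩
    simpa using hx k
  rw [DFmap, if_neg hvertex, DFalpha, inv_mul_eq_div]

theorem sum_le_sum_div_one_sub (s : Finset (Fin n)) (hc : ∀ i, 0 ≤ c i) (hx0 : ∀ i, 0 ≤ x i)
    (hx1 : ∀ i, x i < 1) : ∑ j ∈ s, c j ≤ ∑ j ∈ s, c j / (1 - x j) :=
  Finset.sum_le_sum fun j _ => le_div_self (hc j) (by linarith [hx1 j]) (by linarith [hx0 j])

theorem one_le_sum_div_one_sub (hc : ∀ i, 0 ≤ c i) (hcsum : ∑ i, c i = 1)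
    (hx0 : ∀ i, 0 ≤ x i) (hx1 : ∀ i, x i < 1) : 1 ≤ ∑ j, c j / (1 - x j) :=
  hcsum ▸ sum_le_sum_div_one_sub Finset.univ hc hx0 hx1

theorem add_one_sub_le_sum_div_one_sub (hc : ∀ i, 0 ≤ c i) (hcsum : ∑ i, c i = 1)
    (hx0 : ∀ i, 0 ≤ x i) (hx1 : ∀ i, x i < 1) (i : Fin n) :
    c i / (1 - x i) + (1 - c i) ≤ ∑ j, c j / (1 - x j) := by
  have hrest := sum_le_sum_div_one_sub (Finset.univ.erase i) hc hx0 hx1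
  rw [Finset.sum_erase_eq_sub (Finset.mem_univ i), hcsum] at hrest
  rw [← Finset.add_sum_erase _ _ (Finset.mem_univ i)]
  linarith

theorem DFmap_mem_simplex (hc : ∀ i, 0 ≤ c i) (hcsum : ∑ i, c i = 1)
    (hx0 : ∀ i, 0 ≤ x i) (hx1 : ∀ i, x i < 1) : DFmap c x ∈ DFsimplex n := by
  have hS := one_le_sum_div_one_sub hc hcsum hx0 hx1
  refine ⟨fun i => ?_, ?_⟩
  · rw [DFmap_apply_of_forall_lt_one hx1]
    exact div_nonneg (div_nonneg (hc i) (by linarith [hx1 i])) (by linarith)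
  · simp only [DFmap_apply_of_forall_lt_one hx1, ← Finset.sum_div]
    exact div_self (by linarith)

theorem DFmap_apply_lt_one_sub {r : ℝ} (hc : ∀ i, 0 ≤ c i) (hcsum : ∑ i, c i = 1)
    (hx0 : ∀ i, 0 ≤ x i) (hr : 0 < r) (hxr : ∀ i, x i ≤ 1 - r) {i : Fin n}
    (hcr : c i < (1 - r) * (1 - c i)) : DFmap c x i < 1 - r := by
  have hx1 : ∀ j, x j < 1 := fun j => by linarith [hxr j]
  have hS := add_one_sub_le_sum_div_one_sub hc hcsum hx0 hx1 i
  have hS1 := one_le_sum_div_one_sub hc hcsum hx0 hx1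
  set t := c i / (1 - x i)
  have ht : 0 ≤ t := div_nonneg (hc i) (by linarith [hx1 i])
  have hrt : r * t ≤ c i := by
    calc r * t ≤ (1 - x i) * t := by gcongr; linarith [hxr i]
      _ = c i := mul_div_cancel₀ _ (by linarith [hx1 i])
  have hr1 : r ≤ 1 := by linarith [hxr i, hx0 i]
  rw [DFmap_apply_of_forall_lt_one hx1, div_lt_iff₀ (by linarith)]
  nlinarith

end

theorem exists_pos_forall_lt_one_sub_mul {ι : Type*} [Finite ι] {c : ι → ℝ}
    (hc : ∀ i, c i < 1 / 2) : ∃ r, 0 < r ∧ r < 1 ∧ ∀ i, c i < (1 - r) * (1 - c i) := by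
  have hnear : ∀ᶠ r in nhds (0 : ℝ), r < 1 ∧ ∀ i, c i < (1 - r) * (1 - c i) := by
    refine (gt_mem_nhds one_pos).and (Filter.eventually_all.2 fun i => ?_)
    have hlim := ((continuous_const.sub continuous_id).mul continuous_const).tendsto' (0 : ℝ)
      ((1 - 0) * (1 - c i)) rfl
    exact hlim.eventually_const_lt (by linarith [hc i])
  obtain ⟨r, hr0, hr⟩ :=
    (eventually_mem_nhdsWithin.and (nhdsWithin_le_nhds hnear) :
      ∀ᶠ r in nhdsWithin (0 : ℝ) (Set.Ioi 0), r ∈ Set.Ioi 0 ∧ _).exists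
  exact ⟨r, hr0, hr⟩

theorem stmt_6_general (n : ℕ) (c : Fin n → ℝ)
    (hc : ∀ i, 0 < c i) (hcsum : ∑ i, c i = 1) (hchalf : ∀ i, c i < 1 / 2) :
    ∃ r : ℝ, 0 < r ∧ r < 1 ∧
      (DFmap c '' {x ∈ DFsimplex n | ∀ i, x i ≤ 1 - r} ⊆
        {x ∈ DFsimplex n | ∀ i, x i ≤ 1 - r}) ∧
      ∀ x ∈ {x ∈ DFsimplex n | ∀ i, x i ≤ 1 - r}, ∀ i, DFmap c x i < 1 - r := by
  have hc_nonneg : ∀ i, 0 ≤ c i := fun i => (hc i).le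
  obtain ⟨r, hr0, hr1, hcr⟩ := exists_pos_forall_lt_one_sub_mul hchalf
  have hlt : ∀ x ∈ {x ∈ DFsimplex n | ∀ i, x i ≤ 1 - r}, ∀ i, DFmap c x i < 1 - r :=
    fun x hx i => DFmap_apply_lt_one_sub hc_nonneg hcsum hx.1.1 hr0 hx.2 (hcr i)
  refine ⟨r, hr0, hr1, ?_, hlt⟩
  rintro _ ⟨x, hx, rfl⟩
  have hx1 : ∀ i, x i < 1 := fun i => by linarith [hx.2 i]
  exact ⟨DFmap_mem_simplex hc_nonneg hcsum hx.1.1 hx1, fun i => (hlt x hx i).le⟩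

/-- If cᵢ < 1/2 for all i, there is r ∈ (0,1) such that the compact convex set
A_r = {x ∈ Δₙ : xᵢ ≤ 1 - r ∀ i} satisfies Fᶜ(A_r) ⊆ A_r; in fact Fᶜ(x)ᵢ < 1 - r on A_r. -/
theorem stmt_6 (n : ℕ) (hn : 3 ≤ n) (c : Fin n → ℝ)
    (hc : ∀ i, 0 < c i) (hcsum : ∑ i, c i = 1) (hchalf : ∀ i, c i < 1 / 2) :
    ∃ r : ℝ, 0 < r ∧ r < 1 ∧
      (DFmap c '' {x ∈ DFsimplex n | ∀ i, x i ≤ 1 - r} ⊆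
        {x ∈ DFsimplex n | ∀ i, x i ≤ 1 - r}) ∧
      ∀ x ∈ {x ∈ DFsimplex n | ∀ i, x i ≤ 1 - r}, ∀ i, DFmap c x i < 1 - r :=
  stmt_6_general n c hc hcsum hchalf
end

section
/- (Lemma 2, property P4) Let M ≥ 2 and let c¹, …, c^M be weight vectors in ℝ^n with strictly positive entries each summing to 1, with c^p_i < 1/2 for all p and all i. Then the composition F_{c^M} ∘ F_{c^{M−1}} ∘ ⋯ ∘ F_{c¹} has at least one fixed point in int(Δ_n). -/
open scoped Classical BigOperators

/-- `DFchain c M start k x` applies, in order, the k maps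
F_{c (start % M)}, F_{c ((start+1) % M)}, …, F_{c ((start+k-1) % M)} to x.
Thus `DFchain c M (p-1) M` is the cyclic composition
F_{c^{p-1}} ∘ ⋯ ∘ F_{c¹} ∘ F_{c^M} ∘ ⋯ ∘ F_{c^p} (with the convention cᵖ = c (p-1)). -/
noncomputable def DFchain {n : ℕ} (c : ℕ → Fin n → ℝ) (M : ℕ) :
    ℕ → ℕ → (Fin n → ℝ) → Fin n → ℝ
  | _, 0, x => x
  | start, k + 1, x => DFchain c M (start + 1) k (DFmap (c (start % M)) x)

/-
Write `ρ(a, b) = max_i (a_i / b_i) * max_i (b_i / a_i)` (`hilbertRatio a b`) for positive vectors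
`a`, `b`; `log ρ` is Hilbert's projective metric. It is unchanged by rescaling `a` or `b` and by
`(a, b) ↦ (w / a, w / b)`. Off the vertices, `1 - F_c(x)` is a positive multiple of
`(J - I) (c / (1 - x))`, hence `ρ(1 - F_c x, 1 - F_c y) = ρ((J - I) a, (J - I) b)` for vectors
`a`, `b` with `ρ(a, b) = ρ(1 - x, 1 - y)`. The matrix `J - I` never increases `ρ`, and for `n ≥ 3`
it strictly decreases it unless `a` and `b` are proportional, which on the simplex means `x = y`.

If `ε ≤ 1 - 2 c_i` for all `i`, then `F_c` maps the compact set `{x ∈ Δ_n | ∀ i, x_i ≤ 1 - ε}` into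
itself and into `int(Δ_n)`. With `G` the composition, a minimiser over this set of
`x ↦ ρ(1 - x, 1 - G x)` is a fixed point of `G`: otherwise applying `G` to it lowers the value.
-/

open Finset Filter Topology

section HilbertRatio

variable {ι : Type*} [Fintype ι] {a b w : ι → ℝ}

section

variable [Nonempty ι]

noncomputable def maxRatio (a b : ι → ℝ) : ℝ :=
  univ.sup' univ_nonempty (a / b)

noncomputable def hilbertRatio (a b : ι → ℝ) : ℝ :=
  maxRatio a b * maxRatio b a

lemma le_maxRatio_mul {i : ι} (hb : 0 < b i) : a i ≤ maxRatio a b * b i :=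
  (div_le_iff₀ hb).1 (le_sup' (a / b) (mem_univ i))

lemma maxRatio_le_iff (hb : ∀ i, 0 < b i) {t : ℝ} :
    maxRatio a b ≤ t ↔ ∀ i, a i ≤ t * b i := by
  simp only [maxRatio, sup'_le_iff, Finset.mem_univ, true_implies, Pi.div_apply, div_le_iff₀ (hb _)]

lemma exists_eq_maxRatio_mul (hb : ∀ i, 0 < b i) : ∃ i, a i = maxRatio a b * b i := by
  obtain ⟨i, -, hi⟩ := exists_mem_eq_sup' univ_nonempty (a / b)
  exact ⟨i, by rw [maxRatio, hi, Pi.div_apply, div_mul_cancel₀ _ (hb i).ne']⟩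

lemma maxRatio_pos (ha : ∀ i, 0 < a i) (hb : ∀ i, 0 < b i) : 0 < maxRatio a b := by
  obtain ⟨i⟩ := ‹Nonempty ι›
  exact (div_pos (ha i) (hb i)).trans_le (le_sup' (a / b) (mem_univ i))

lemma one_le_maxRatio_of_sum_le (hb : ∀ i, 0 < b i) (hsum : ∑ i, b i ≤ ∑ i, a i) :
    1 ≤ maxRatio a b := by
  have hpos : 0 < ∑ i, b i := sum_pos (fun i _ => hb i) univ_nonempty
  have : ∑ i, a i ≤ maxRatio a b * ∑ i, b i := by
    rw [mul_sum]; exact sum_le_sum fun i _ => le_maxRatio_mul (hb i)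
  nlinarith

lemma maxRatio_smul {s t : ℝ} (hs : 0 < s) (ht : 0 < t) :
    maxRatio (s • a) (t • b) = s / t * maxRatio a b := by
  rw [maxRatio, maxRatio, mul₀_sup' (div_pos hs ht).le]
  refine sup'_congr _ rfl fun i _ => ?_
  simp only [Pi.div_apply, Pi.smul_apply, smul_eq_mul]
  field_simp

lemma maxRatio_div_div (hw : ∀ i, w i ≠ 0) : maxRatio (w / a) (w / b) = maxRatio b a := by
  rw [maxRatio, maxRatio]
  refine sup'_congr _ rfl fun i _ => ?_
  simp only [Pi.div_apply, div_div_div_cancel_left' _ _ (hw i)]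

lemma hilbertRatio_comm (a b : ι → ℝ) : hilbertRatio a b = hilbertRatio b a :=
  mul_comm _ _

lemma hilbertRatio_smul {s t : ℝ} (hs : 0 < s) (ht : 0 < t) :
    hilbertRatio (s • a) (t • b) = hilbertRatio a b := by
  rw [hilbertRatio, hilbertRatio, maxRatio_smul hs ht, maxRatio_smul ht hs]
  field_simp

lemma hilbertRatio_div_div (hw : ∀ i, w i ≠ 0) :
    hilbertRatio (w / a) (w / b) = hilbertRatio a b := by
  rw [hilbertRatio, maxRatio_div_div hw, maxRatio_div_div hw, hilbertRatio_comm, hilbertRatio]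

lemma one_lt_hilbertRatio (ha : ∀ i, 0 < a i) (hb : ∀ i, 0 < b i)
    (hsum : ∑ i, a i = ∑ i, b i) (hab : a ≠ b) : 1 < hilbertRatio a b := by
  have hP := one_le_maxRatio_of_sum_le hb hsum.ge
  have hQ := one_le_maxRatio_of_sum_le ha hsum.le
  by_contra! h
  have hP1 : maxRatio a b = 1 := by unfold hilbertRatio at h; nlinarith
  have hQ1 : maxRatio b a = 1 := by unfold hilbertRatio at h; nlinarith
  refine hab (funext fun i => le_antisymm ?_ ?_)
  · simpa [hP1] using le_maxRatio_mul (a := a) (hb i)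
  · simpa [hQ1] using le_maxRatio_mul (a := b) (ha i)

lemma ContinuousOn.hilbertRatio {X : Type*} [TopologicalSpace X] {f g : X → ι → ℝ}
    {s : Set X} (hf : ContinuousOn f s) (hg : ContinuousOn g s)
    (hf0 : ∀ x ∈ s, ∀ i, f x i ≠ 0) (hg0 : ∀ x ∈ s, ∀ i, g x i ≠ 0) :
    ContinuousOn (fun x => hilbertRatio (f x) (g x)) s := by
  have hfi i : ContinuousOn (f · i) s := (continuous_apply i).comp_continuousOn hf
  have hgi i : ContinuousOn (g · i) s := (continuous_apply i).comp_continuousOn hg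
  refine ContinuousOn.mul ?_ ?_ <;> refine ContinuousOn.finset_sup'_apply _ fun i _ => ?_
  · exact (hfi i).div (hgi i) fun x hx => hg0 x hx i
  · exact (hgi i).div (hfi i) fun x hx => hf0 x hx i

end

variable [DecidableEq ι]

def sumOthers (a : ι → ℝ) (i : ι) : ℝ :=
  ∑ j ∈ univ.erase i, a j

lemma sumOthers_pos [Nontrivial ι] (ha : ∀ i, 0 < a i) (i : ι) : 0 < sumOthers a i :=
  sum_pos (fun j _ => ha j) (univ_nontrivial.erase_nonempty)

lemma inv_smul_sumOthers (hw : ∑ j, w j ≠ 0) :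
    (∑ j, w j)⁻¹ • sumOthers w = 1 - (∑ j, w j)⁻¹ • w := by
  funext i
  simp only [sumOthers, Pi.smul_apply, Pi.sub_apply, Pi.one_apply, smul_eq_mul,
    sum_erase_eq_sub (mem_univ i)]
  field_simp

lemma maxRatio_sumOthers_le [Nontrivial ι] (hb : ∀ i, 0 < b i) :
    maxRatio (sumOthers a) (sumOthers b) ≤ maxRatio a b := by
  rw [maxRatio_le_iff (sumOthers_pos hb)]
  intro i
  rw [sumOthers, sumOthers, mul_sum]
  exact sum_le_sum fun j _ => le_maxRatio_mul (hb j)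

lemma hilbertRatio_sumOthers_le [Nontrivial ι] (ha : ∀ i, 0 < a i) (hb : ∀ i, 0 < b i) :
    hilbertRatio (sumOthers a) (sumOthers b) ≤ hilbertRatio a b :=
  mul_le_mul (maxRatio_sumOthers_le hb) (maxRatio_sumOthers_le ha)
    (maxRatio_pos (sumOthers_pos hb) (sumOthers_pos ha)).le (maxRatio_pos ha hb).le

lemma eq_maxRatio_mul_of_sumOthers [Nonempty ι] (hb : ∀ i, 0 < b i) {i : ι}
    (hi : sumOthers a i = maxRatio a b * sumOthers b i) :
    ∀ j ≠ i, a j = maxRatio a b * b j := by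
  rw [sumOthers, sumOthers, mul_sum,
    sum_eq_sum_iff_of_le fun j _ => le_maxRatio_mul (hb j)] at hi
  exact fun j hj => hi j (mem_erase.2 ⟨hj, mem_univ j⟩)

lemma hilbertRatio_sumOthers_lt [Nonempty ι] (hι : 3 ≤ Fintype.card ι) (ha : ∀ i, 0 < a i)
    (hb : ∀ i, 0 < b i) (h1 : 1 < hilbertRatio a b) :
    hilbertRatio (sumOthers a) (sumOthers b) < hilbertRatio a b := by
  -- Equality would force both maximal ratios `P`, `Q` to be attained by `sumOthers` at some `i`,
  -- `k`; at a third index `j` this gives `a j = P * b j` and `b j = Q * a j`, so `P * Q = 1`.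
  have : Nontrivial ι := Fintype.one_lt_card_iff_nontrivial.1 (by omega)
  set P := maxRatio a b
  set Q := maxRatio b a
  have hP' := maxRatio_sumOthers_le (a := a) hb
  have hQ' := maxRatio_sumOthers_le (a := b) ha
  have hP'0 := maxRatio_pos (sumOthers_pos ha) (sumOthers_pos hb)
  have hQ'0 := maxRatio_pos (sumOthers_pos hb) (sumOthers_pos ha)
  by_contra! h
  unfold hilbertRatio at h h1
  have hPeq : maxRatio (sumOthers a) (sumOthers b) = P := by nlinarith
  have hQeq : maxRatio (sumOthers b) (sumOthers a) = Q := by nlinarith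
  obtain ⟨i, hi⟩ := exists_eq_maxRatio_mul (a := sumOthers a) (sumOthers_pos hb)
  obtain ⟨k, hk⟩ := exists_eq_maxRatio_mul (a := sumOthers b) (sumOthers_pos ha)
  rw [hPeq] at hi
  rw [hQeq] at hk
  obtain ⟨j, hji, hjk⟩ : ∃ j ∈ univ.erase i, j ≠ k := exists_mem_ne (by
    rw [card_erase_of_mem (mem_univ i), card_univ]; omega) k
  have haj := eq_maxRatio_mul_of_sumOthers hb hi j (ne_of_mem_erase hji)
  have hbj := eq_maxRatio_mul_of_sumOthers ha hk j hjk
  have := ha j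
  nlinarith

end HilbertRatio

lemma IsCompact.exists_isFixedPt_of_lt {X : Type*} [TopologicalSpace X] {K : Set X}
    {G : X → X} {d : X → X → ℝ} (hK : IsCompact K) (hne : K.Nonempty) (hG : Set.MapsTo G K K)
    (hd : ContinuousOn (fun x => d x (G x)) K)
    (hlt : ∀ x ∈ K, G x ≠ x → d (G x) (G (G x)) < d x (G x)) :
    ∃ x ∈ K, Function.IsFixedPt G x := by
  obtain ⟨x, hx, hmin⟩ := hK.exists_isMinOn hne hd
  by_contra! hfix
  exact (hlt x hx (hfix x hx)).not_ge (hmin (hG hx))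

lemma Set.Finite.exists_pos_forall_le {ι κ : Type*} [Finite κ] {I : Set ι} (hI : I.Finite)
    {f : ι → κ → ℝ} (hf : ∀ i ∈ I, ∀ k, 0 < f i k) : ∃ ε > 0, ∀ i ∈ I, ∀ k, ε ≤ f i k := by
  have hsmall : ∀ᶠ ε in 𝓝 (0 : ℝ), ∀ i ∈ I, ∀ k, ε ≤ f i k :=
    (eventually_all_finite hI).2 fun i hi =>
      eventually_all.2 fun k => eventually_le_nhds (hf i hi k)
  obtain ⟨ε, hε, hε0⟩ := ((hsmall.filter_mono nhdsWithin_le_nhds).and self_mem_nhdsWithin).exists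
    (f := 𝓝[>] 0)
  exact ⟨ε, hε0, hε⟩

section DeGrootFriedkin

variable {n : ℕ} {c x y : Fin n → ℝ} {ε : ℝ}

def DFsimplexTrunc (n : ℕ) (ε : ℝ) : Set (Fin n → ℝ) :=
  {x | x ∈ DFsimplex n ∧ ∀ i, x i ≤ 1 - ε}

lemma isCompact_DFsimplexTrunc (hε : 0 ≤ ε) : IsCompact (DFsimplexTrunc n ε) := by
  have hclosed : IsClosed (DFsimplexTrunc n ε) := by
    simp only [DFsimplexTrunc, DFsimplex, Set.ofPred_and, Set.ofPred_forall]
    refine ((isClosed_iInter fun i => isClosed_le continuous_const (continuous_apply i)).inter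
      (isClosed_eq (continuous_finsetSum _ fun i _ => continuous_apply i) continuous_const)).inter
      (isClosed_iInter fun i => isClosed_le (continuous_apply i) continuous_const)
  refine (isCompact_Icc (a := 0) (b := 1)).of_isClosed_subset hclosed
    fun x hx => ⟨hx.1.1, fun i => ?_⟩
  simp only [Pi.one_apply]
  linarith [hx.2 i]

lemma DFsimplexTrunc_subset_DFsimplexTilde (hε : 0 < ε) :
    DFsimplexTrunc n ε ⊆ DFsimplexTilde n :=
  fun x hx => ⟨hx.1, fun i => by linarith [hx.2 i]⟩

lemma DFmap_eq_of_forall_lt_one (hx : ∀ i, x i < 1) :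
    DFmap c x = DFalpha c x • (c / (1 - x)) := by
  have hvertex : ¬ ∃ i, x = Pi.single i 1 := by
    rintro ⟨i, rfl⟩
    simpa using hx i
  rw [DFmap, if_neg hvertex]
  rfl

lemma DFalpha_pos [NeZero n] (hc : ∀ i, 0 < c i) (hx : ∀ i, x i < 1) : 0 < DFalpha c x :=
  inv_pos.2 (sum_pos (fun j _ => div_pos (hc j) (sub_pos.2 (hx j))) univ_nonempty)

lemma one_sub_DFmap [NeZero n] (hc : ∀ i, 0 < c i) (hx : ∀ i, x i < 1) :
    1 - DFmap c x = DFalpha c x • sumOthers (c / (1 - x)) := by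
  have hS : ∑ j, (c / (1 - x)) j ≠ 0 := (inv_pos.1 (DFalpha_pos hc hx)).ne'
  rw [DFmap_eq_of_forall_lt_one hx, DFalpha]
  exact (inv_smul_sumOthers hS).symm

lemma DFmap_mem_DFsimplexInt [NeZero n] (hc : ∀ i, 0 < c i) (hx : ∀ i, x i < 1) :
    DFmap c x ∈ DFsimplexInt n := by
  have hα := DFalpha_pos hc hx
  have hpos : ∀ i, 0 < DFmap c x i := by
    rw [DFmap_eq_of_forall_lt_one hx]
    exact fun i => mul_pos hα (div_pos (hc i) (sub_pos.2 (hx i)))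
  refine ⟨⟨fun i => (hpos i).le, ?_⟩, hpos⟩
  rw [DFmap_eq_of_forall_lt_one hx]
  simp only [Pi.smul_apply, smul_eq_mul, ← mul_sum, DFalpha]
  exact inv_mul_cancel₀ (inv_pos.1 hα).ne'

lemma DFmap_le_one_sub [NeZero n] (hc : ∀ i, 0 < c i) (hcsum : ∑ i, c i = 1) (hε : 0 < ε)
    (hcε : ∀ i, ε ≤ 1 - 2 * c i) (hx : x ∈ DFsimplexTrunc n ε) (i : Fin n) :
    DFmap c x i ≤ 1 - ε := by
  have hx1 : ∀ i, x i < 1 := (DFsimplexTrunc_subset_DFsimplexTilde hε hx).2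
  set w := c / (1 - x)
  have hwi : ε * w i ≤ c i := by
    change ε * (c i / (1 - x i)) ≤ c i
    rw [← mul_div_assoc, div_le_iff₀ (sub_pos.2 (hx1 i))]
    nlinarith [hx.2 i, hc i]
  have hothers : 1 - c i ≤ sumOthers w i := by
    rw [← hcsum, ← sum_erase_eq_sub (mem_univ i)]
    refine sum_le_sum fun j _ => le_div_self (hc j).le (sub_pos.2 (hx1 j)) ?_
    simp only [Pi.sub_apply, Pi.one_apply]
    linarith [hx.1.1 j]
  have hS : ∑ j, w j = w i + sumOthers w i := (add_sum_erase _ _ (mem_univ i)).symm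
  have hone_sub := congrFun (one_sub_DFmap hc hx1) i
  simp only [Pi.sub_apply, Pi.one_apply, Pi.smul_apply, smul_eq_mul] at hone_sub
  suffices ε ≤ DFalpha c x * sumOthers w i by linarith
  rw [DFalpha, ← div_eq_inv_mul, le_div_iff₀ (inv_pos.1 (DFalpha_pos hc hx1))]
  change ε * ∑ j, w j ≤ sumOthers w i
  -- `ε * w i ≤ c i ≤ (1 - ε) * (1 - c i) ≤ (1 - ε) * sumOthers w i`, the middle step being
  -- `ε * (1 - c i) ≤ 1 - 2 * c i`.
  nlinarith [hcε i, hc i]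

lemma mapsTo_DFmap_DFsimplexTrunc [NeZero n] (hc : ∀ i, 0 < c i) (hcsum : ∑ i, c i = 1)
    (hε : 0 < ε) (hcε : ∀ i, ε ≤ 1 - 2 * c i) :
    Set.MapsTo (DFmap c) (DFsimplexTrunc n ε) (DFsimplexInt n ∩ DFsimplexTrunc n ε) :=
  fun _ hx =>
    have hint := DFmap_mem_DFsimplexInt hc (DFsimplexTrunc_subset_DFsimplexTilde hε hx).2
    ⟨hint, hint.1, DFmap_le_one_sub hc hcsum hε hcε hx⟩

noncomputable def DFratio [NeZero n] (x y : Fin n → ℝ) : ℝ :=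
  hilbertRatio (1 - x) (1 - y)

lemma ContinuousOn.DFratio [NeZero n] {X : Type*} [TopologicalSpace X] {f g : X → Fin n → ℝ}
    {s : Set X} (hf : ContinuousOn f s) (hg : ContinuousOn g s)
    (hfs : Set.MapsTo f s (DFsimplexTilde n)) (hgs : Set.MapsTo g s (DFsimplexTilde n)) :
    ContinuousOn (fun x => DFratio (f x) (g x)) s :=
  (continuousOn_const.sub hf).hilbertRatio (continuousOn_const.sub hg)
    (fun _ hx i => (sub_pos.2 ((hfs hx).2 i)).ne') (fun _ hx i => (sub_pos.2 ((hgs hx).2 i)).ne')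

lemma hilbertRatio_one_sub_DFmap [NeZero n] (hc : ∀ i, 0 < c i) (hx : ∀ i, x i < 1)
    (hy : ∀ i, y i < 1) :
    hilbertRatio (1 - DFmap c x) (1 - DFmap c y) =
      hilbertRatio (sumOthers (c / (1 - x))) (sumOthers (c / (1 - y))) := by
  rw [one_sub_DFmap hc hx, one_sub_DFmap hc hy,
    hilbertRatio_smul (DFalpha_pos hc hx) (DFalpha_pos hc hy)]

lemma DFratio_DFmap_le [NeZero n] (hn : 2 ≤ n) (hc : ∀ i, 0 < c i)
    (hx : ∀ i, x i < 1) (hy : ∀ i, y i < 1) : DFratio (DFmap c x) (DFmap c y) ≤ DFratio x y := by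
  have : Nontrivial (Fin n) := Fin.nontrivial_iff_two_le.2 hn
  rw [DFratio, DFratio, hilbertRatio_one_sub_DFmap hc hx hy]
  exact (hilbertRatio_sumOthers_le (fun i => div_pos (hc i) (sub_pos.2 (hx i)))
    (fun i => div_pos (hc i) (sub_pos.2 (hy i)))).trans_eq
    (hilbertRatio_div_div fun i => (hc i).ne')

lemma DFratio_DFmap_lt [NeZero n] (hn : 3 ≤ n) (hc : ∀ i, 0 < c i)
    (hx : x ∈ DFsimplexTilde n) (hy : y ∈ DFsimplexTilde n) (hxy : x ≠ y) :
    DFratio (DFmap c x) (DFmap c y) < DFratio x y := by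
  have h1x : ∀ i, 0 < (1 - x) i := fun i => sub_pos.2 (hx.2 i)
  have h1y : ∀ i, 0 < (1 - y) i := fun i => sub_pos.2 (hy.2 i)
  have hsum : ∑ i, (1 - x) i = ∑ i, (1 - y) i := by
    simp only [Pi.sub_apply, Pi.one_apply, sum_sub_distrib, hx.1.2, hy.1.2]
  have hratio : hilbertRatio (c / (1 - x)) (c / (1 - y)) = hilbertRatio (1 - x) (1 - y) :=
    hilbertRatio_div_div fun i => (hc i).ne'
  rw [DFratio, DFratio, hilbertRatio_one_sub_DFmap hc hx.2 hy.2, ← hratio]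
  refine hilbertRatio_sumOthers_lt (by simpa using hn) (fun i => div_pos (hc i) (h1x i))
    (fun i => div_pos (hc i) (h1y i)) ?_
  rw [hratio]
  exact one_lt_hilbertRatio h1x h1y hsum (sub_right_injective.ne hxy)

lemma continuousOn_DFmap [NeZero n] (hc : ∀ i, 0 < c i) :
    ContinuousOn (DFmap c) (DFsimplexTilde n) := by
  have h1 : ∀ x ∈ DFsimplexTilde n, ∀ j, 1 - x j ≠ 0 := fun x hx j => (sub_pos.2 (hx.2 j)).ne'
  have hS : ∀ x ∈ DFsimplexTilde n, ∑ j, c j / (1 - x j) ≠ 0 :=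
    fun x hx => (inv_pos.1 (DFalpha_pos hc hx.2)).ne'
  have hq : ∀ j, ContinuousOn (fun x : Fin n → ℝ => c j / (1 - x j)) (DFsimplexTilde n) :=
    fun j => continuousOn_const.div (continuousOn_const.sub (continuous_apply j).continuousOn)
      fun x hx => h1 x hx j
  refine ContinuousOn.congr (f := fun x i => (∑ j, c j / (1 - x j))⁻¹ * (c i / (1 - x i))) ?_
    fun x hx => DFmap_eq_of_forall_lt_one hx.2
  exact continuousOn_pi.2 fun i => ((continuousOn_finsetSum _ fun j _ => hq j).inv₀ hS).mul (hq i)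

end DeGrootFriedkin

section Chain

variable {n M : ℕ} {c : ℕ → Fin n → ℝ} {K T : Set (Fin n → ℝ)}

lemma mapsTo_DFchain (hT : ∀ p, Set.MapsTo (DFmap (c (p % M))) K T) (hTK : T ⊆ K) {k : ℕ}
    (hk : k ≠ 0) (start : ℕ) : Set.MapsTo (DFchain c M start k) K T := by
  induction k generalizing start with
  | zero => exact absurd rfl hk
  | succ k ih =>
    rcases eq_or_ne k 0 with rfl | hk0
    · exact hT start
    · exact fun x hx => ih hk0 (start + 1) (hTK (hT start hx))

lemma continuousOn_DFchain (hmaps : ∀ p, Set.MapsTo (DFmap (c (p % M))) K K)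
    (hcont : ∀ p, ContinuousOn (DFmap (c (p % M))) K) :
    ∀ k start, ContinuousOn (DFchain c M start k) K
  | 0, _ => continuousOn_id
  | k + 1, start => (continuousOn_DFchain hmaps hcont k (start + 1)).comp (hcont start)
      (hmaps start)

variable {R : (Fin n → ℝ) → (Fin n → ℝ) → ℝ}
  (hmaps : ∀ p, Set.MapsTo (DFmap (c (p % M))) K K)
  (hle : ∀ p, ∀ x ∈ K, ∀ y ∈ K, R (DFmap (c (p % M)) x) (DFmap (c (p % M)) y) ≤ R x y)
include hmaps hle

lemma DFchain_le (k start : ℕ) {x y : Fin n → ℝ} (hx : x ∈ K) (hy : y ∈ K) :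
    R (DFchain c M start k x) (DFchain c M start k y) ≤ R x y := by
  induction k generalizing start x y with
  | zero => exact le_rfl
  | succ k ih =>
    exact (ih (start + 1) (hmaps start hx) (hmaps start hy)).trans (hle start x hx y hy)

lemma DFchain_lt
    (hlt : ∀ p, ∀ x ∈ K, ∀ y ∈ K, x ≠ y → R (DFmap (c (p % M)) x) (DFmap (c (p % M)) y) < R x y)
    {k : ℕ} (hk : k ≠ 0) (start : ℕ) {x y : Fin n → ℝ} (hx : x ∈ K) (hy : y ∈ K)
    (hxy : x ≠ y) : R (DFchain c M start k x) (DFchain c M start k y) < R x y := by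
  obtain ⟨k, rfl⟩ := Nat.exists_eq_succ_of_ne_zero hk
  exact (DFchain_le hmaps hle k (start + 1) (hmaps start hx) (hmaps start hy)).trans_lt
    (hlt start x hx y hy hxy)

end Chain

/-- Lemma 2, property P4: if every cᵖᵢ < 1/2, the cyclic composition
F_{c^M} ∘ F_{c^{M-1}} ∘ ⋯ ∘ F_{c¹} has at least one fixed point in int(Δₙ).
(Here cᵖ of the informal statement is `c (p-1)`.) -/
theorem stmt_13 (n : ℕ) (hn : 3 ≤ n) (M : ℕ) (hM : 2 ≤ M) (c : ℕ → Fin n → ℝ)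
    (hc : ∀ p < M, ∀ i, 0 < c p i) (hcsum : ∀ p < M, ∑ i, c p i = 1)
    (hchalf : ∀ p < M, ∀ i, c p i < 1 / 2) :
    ∃ y ∈ DFsimplexInt n, DFchain c M 0 M y = y := by
  have : NeZero n := ⟨by omega⟩
  have hM0 : 0 < M := by omega
  have hmod p : p % M < M := Nat.mod_lt p hM0
  obtain ⟨ε, hε0, hε⟩ := (Set.finite_Iio M).exists_pos_forall_le
    fun p hp i => (by linarith [hchalf p hp i] : 0 < 1 - 2 * c p i)
  set K := DFsimplexTrunc n ε
  set G := DFchain c M 0 M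
  have hKT : K ⊆ DFsimplexTilde n := DFsimplexTrunc_subset_DFsimplexTilde hε0
  have hT p : Set.MapsTo (DFmap (c (p % M))) K (DFsimplexInt n ∩ K) :=
    mapsTo_DFmap_DFsimplexTrunc (hc _ (hmod p)) (hcsum _ (hmod p)) hε0 (hε _ (hmod p))
  have hmaps p : Set.MapsTo (DFmap (c (p % M))) K K := (hT p).mono_right Set.inter_subset_right
  have hG : Set.MapsTo G K (DFsimplexInt n ∩ K) :=
    mapsTo_DFchain hT Set.inter_subset_right (by omega) 0
  have hK : K.Nonempty := ⟨c 0, ⟨fun i => (hc 0 hM0 i).le, hcsum 0 hM0⟩,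
    fun i => by linarith [hε 0 hM0 i, hc 0 hM0 i]⟩
  have hcont : ContinuousOn (fun x => DFratio x (G x)) K :=
    continuousOn_id.DFratio
      (continuousOn_DFchain hmaps (fun p => (continuousOn_DFmap (hc _ (hmod p))).mono hKT) M 0)
      (fun _ hx => hKT hx) (fun _ hx => hKT (hG hx).2)
  have hlt : ∀ x ∈ K, G x ≠ x → DFratio (G x) (G (G x)) < DFratio x (G x) :=
    fun x hx hGx => DFchain_lt hmaps
      (fun p x hx y hy => DFratio_DFmap_le (by omega) (hc _ (hmod p)) (hKT hx).2 (hKT hy).2)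
      (fun p x hx y hy => DFratio_DFmap_lt hn (hc _ (hmod p)) (hKT hx) (hKT hy))
      (by omega) 0 hx (hG hx).2 hGx.symm
  obtain ⟨y, hyK, hy⟩ := (isCompact_DFsimplexTrunc hε0.le).exists_isFixedPt_of_lt hK
    (hG.mono_right Set.inter_subset_right) hcont hlt
  exact ⟨y, hy ▸ (hG hyK).1, hy⟩
end

section
/- (Theorem 4) Let c = (1/n, …, 1/n) be the uniform weight vector (the dominant left eigenvector common to all doubly stochastic irreducible relative interaction matrices). Then for every initial condition x(1) ∈ Δ̃_n, the sequence of self-weight vectors defined by x(s+1) = F_c(x(s)) converges, as s → ∞, to the democratic configuration x* with x*_i = 1/n for every i ∈ {1, …, n}. -/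
open scoped Classical BigOperators

/-!
With uniform weights the map reads `F(x) = t / ∑ t` where `tᵢ = (1 - xᵢ)⁻¹`, so in the coordinates
`t` one step is `tᵢ ↦ T / (T - tᵢ)` with `T = ∑ t`. If all `tᵢ` lie in `[m, M]`, the new coordinates
lie in `[T / (T - m), T / (T - M)]`, whose ratio minus one is `(M - m) / (T - M)`. For `n ≥ 3` the
coordinates other than a maximal one contribute `T - M ≥ 2m`, so the spread `M / m - 1` at least
halves at every step. Since `t / ∑ t` lies within `M / m - 1` of the uniform vector, the trajectory
converges geometrically to `(1/n, …, 1/n)`.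
-/

open Finset Filter Topology

namespace DeGrootFriedkin

variable {ι : Type*}

noncomputable def invOneSub (x : ι → ℝ) : ι → ℝ := fun i => (1 - x i)⁻¹

lemma invOneSub_pos {x : ι → ℝ} (hx : ∀ i, x i < 1) (i : ι) : 0 < invOneSub x i :=
  inv_pos.mpr (sub_pos.mpr (hx i))

variable [Fintype ι]

noncomputable def normalizeSum (t : ι → ℝ) : ι → ℝ := fun i => t i / ∑ j, t j

noncomputable def spread [Nonempty ι] (t : ι → ℝ) : ℝ :=
  univ.sup' univ_nonempty t / univ.inf' univ_nonempty t - 1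

lemma DFmap_const_eq {n : ℕ} {c : ℝ} (hc : c ≠ 0) {x : Fin n → ℝ} (hx : ∀ i, x i < 1) :
    DFmap (fun _ => c) x = normalizeSum (invOneSub x) := by
  have hvertex : ¬ ∃ i, x = Pi.single i 1 := by
    rintro ⟨i, rfl⟩
    simpa using hx i
  funext i
  simp only [DFmap, hvertex, if_false, DFalpha, normalizeSum, invOneSub, div_eq_mul_inv c,
    ← mul_sum, mul_inv]
  field_simp

lemma sum_sub_pos [Nontrivial ι] {t : ι → ℝ} (ht : ∀ j, 0 < t j) (i : ι) :
    0 < ∑ j, t j - t i := by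
  obtain ⟨j, hj⟩ := exists_ne i
  rw [← sum_erase_eq_sub (mem_univ i)]
  exact sum_pos (fun k _ => ht k) ⟨j, mem_erase.mpr ⟨hj, mem_univ j⟩⟩

lemma normalizeSum_lt_one [Nontrivial ι] {t : ι → ℝ} (ht : ∀ j, 0 < t j) (i : ι) :
    normalizeSum t i < 1 := by
  have hti := sum_sub_pos ht i
  rw [normalizeSum, div_lt_one (by linarith [ht i])]
  linarith

lemma iterate_invOneSub_normalizeSum_pos [Nontrivial ι] {t : ι → ℝ} (ht : ∀ j, 0 < t j) (k : ℕ) :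
    ∀ i, 0 < ((invOneSub ∘ normalizeSum)^[k] t) i := by
  induction k with
  | zero => exact ht
  | succ k ih =>
    rw [Function.iterate_succ_apply']
    exact invOneSub_pos (normalizeSum_lt_one ih)

lemma invOneSub_normalizeSum {t : ι → ℝ} (hT : ∑ j, t j ≠ 0) (i : ι) :
    invOneSub (normalizeSum t) i = (∑ j, t j) / (∑ j, t j - t i) := by
  rw [invOneSub, normalizeSum, one_sub_div hT, inv_div]

lemma card_sub_one_mul_le_sum_sub {t : ι → ℝ} {m : ℝ} (hm : ∀ j, m ≤ t j) (i : ι) :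
    ((Fintype.card ι : ℝ) - 1) * m ≤ ∑ j, t j - t i := by
  have h := card_nsmul_le_sum (univ.erase i) t m fun j _ => hm j
  rwa [card_erase_of_mem (mem_univ i), card_univ, nsmul_eq_mul,
    Nat.cast_pred (Fintype.card_pos_iff.mpr ⟨i⟩), sum_erase_eq_sub (mem_univ i)] at h

lemma spread_le_of_forall_mem_Icc [Nonempty ι] {t : ι → ℝ} {a b : ℝ} (ha : 0 < a)
    (h : ∀ i, t i ∈ Set.Icc a b) : spread t ≤ b / a - 1 := by
  have hinf : a ≤ univ.inf' univ_nonempty t := le_inf' _ _ fun i _ => (h i).1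
  have hsup : univ.sup' univ_nonempty t ≤ b := sup'_le _ _ fun i _ => (h i).2
  have hb : 0 ≤ b := ha.le.trans ((h (Classical.arbitrary ι)).1.trans (h _).2)
  unfold spread
  gcongr

lemma spread_invOneSub_normalizeSum_le [Nonempty ι] (hcard : 3 ≤ Fintype.card ι) {t : ι → ℝ}
    (ht : ∀ i, 0 < t i) : spread (invOneSub (normalizeSum t)) ≤ spread t / 2 := by
  obtain ⟨iM, -, hiM⟩ := exists_mem_eq_sup' univ_nonempty t
  obtain ⟨im, -, him⟩ := exists_mem_eq_inf' univ_nonempty t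
  set m := univ.inf' univ_nonempty t
  set M := univ.sup' univ_nonempty t
  set T := ∑ j, t j
  have hmt : ∀ i, m ≤ t i := fun i => inf'_le _ (mem_univ i)
  have htM : ∀ i, t i ≤ M := fun i => le_sup' _ (mem_univ i)
  have hm : 0 < m := him ▸ ht im
  have hTM : 2 * m ≤ T - M := by
    have h := card_sub_one_mul_le_sum_sub hmt iM
    have hcard' : (3 : ℝ) ≤ Fintype.card ι := by exact_mod_cast hcard
    rw [hiM]
    nlinarith
  have hT : 0 < T := by linarith [htM im]
  have hbounds : ∀ i, invOneSub (normalizeSum t) i ∈ Set.Icc (T / (T - m)) (T / (T - M)) :=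
      fun i => by
    rw [invOneSub_normalizeSum hT.ne']
    exact ⟨div_le_div_of_nonneg_left hT.le (by linarith [htM i]) (by linarith [hmt i]),
      div_le_div_of_nonneg_left hT.le (by linarith) (by linarith [htM i])⟩
  calc spread (invOneSub (normalizeSum t)) ≤ T / (T - M) / (T / (T - m)) - 1 :=
        spread_le_of_forall_mem_Icc (div_pos hT (by linarith [htM im])) hbounds
    _ = (M - m) / (T - M) := by
        field_simp [(by linarith : T - M ≠ 0), (by linarith [htM im] : T - m ≠ 0)]
        ring
    _ ≤ (M - m) / (2 * m) := by gcongr; linarith [htM im]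
    _ = spread t / 2 := by rw [show spread t = M / m - 1 from rfl]; field_simp

lemma abs_normalizeSum_sub_le_spread [Nonempty ι] {t : ι → ℝ} (ht : ∀ i, 0 < t i) (i : ι) :
    |normalizeSum t i - 1 / Fintype.card ι| ≤ spread t := by
  obtain ⟨im, -, him⟩ := exists_mem_eq_inf' univ_nonempty t
  set m := univ.inf' univ_nonempty t
  set M := univ.sup' univ_nonempty t
  set T := ∑ j, t j
  have hmt : ∀ i, m ≤ t i := fun i => inf'_le _ (mem_univ i)
  have htM : ∀ i, t i ≤ M := fun i => le_sup' _ (mem_univ i)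
  have hm : 0 < m := him ▸ ht im
  have hcard : (1 : ℝ) ≤ Fintype.card ι := by exact_mod_cast Fintype.card_pos
  have hTm : Fintype.card ι * m ≤ T := by
    simpa using card_nsmul_le_sum univ t m fun j _ => hmt j
  have hTM : T ≤ Fintype.card ι * M := by
    simpa using sum_le_card_nsmul univ t M fun j _ => htM j
  have hT : 0 < T := by nlinarith
  calc |normalizeSum t i - 1 / Fintype.card ι| ≤ M / T - m / T := by
        apply abs_sub_le_of_le_of_le
        · exact div_le_div_of_nonneg_right (hmt i) hT.le
        · exact div_le_div_of_nonneg_right (htM i) hT.le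
        · rw [div_le_div_iff₀ hT (by linarith)]; linarith
        · rw [div_le_div_iff₀ (by linarith) hT]; linarith
    _ = (M - m) / T := by ring
    _ ≤ (M - m) / m := by gcongr <;> nlinarith [htM im]
    _ = spread t := by rw [show spread t = M / m - 1 from rfl]; field_simp

lemma tendsto_normalizeSum_iterate (hcard : 3 ≤ Fintype.card ι) {t : ι → ℝ} (ht : ∀ i, 0 < t i) :
    Tendsto (fun k => normalizeSum ((invOneSub ∘ normalizeSum)^[k] t)) atTop
      (𝓝 fun _ => 1 / Fintype.card ι) := by
  have : Nonempty ι := Fintype.card_pos_iff.mp (by omega)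
  have : Nontrivial ι := Fintype.one_lt_card_iff_nontrivial.mp (by omega)
  have hpos := iterate_invOneSub_normalizeSum_pos ht
  have hspread : ∀ k, spread ((invOneSub ∘ normalizeSum)^[k] t) ≤ spread t * (1 / 2) ^ k := by
    intro k
    induction k with
    | zero => simp
    | succ k ih =>
      rw [Function.iterate_succ_apply', Function.comp_apply, pow_succ]
      linarith [spread_invOneSub_normalizeSum_le hcard (hpos k)]
  have hgeom : Tendsto (fun k : ℕ => spread t * (1 / 2) ^ k) atTop (𝓝 0) := by
    simpa using (tendsto_pow_atTop_nhds_zero_of_lt_one (r := (1 / 2 : ℝ)) (by norm_num)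
      (by norm_num)).const_mul (spread t)
  rw [tendsto_pi_nhds]
  intro i
  rw [← tendsto_sub_nhds_zero_iff]
  refine squeeze_zero_norm (fun k => ?_) hgeom
  rw [Real.norm_eq_abs]
  exact (abs_normalizeSum_sub_le_spread (hpos k) i).trans (hspread k)

end DeGrootFriedkin

open DeGrootFriedkin

/-- Theorem 4: with the uniform weight vector c = (1/n,…,1/n) (the dominant left
eigenvector common to all doubly stochastic irreducible relative interaction matrices),
every trajectory x(s+1) = Fᶜ(x(s)) starting from x(1) ∈ Δ̃ₙ converges to the democratic
configuration (1/n,…,1/n). -/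
theorem stmt_18 (n : ℕ) (hn : 3 ≤ n) (x : ℕ → Fin n → ℝ)
    (hx1 : x 1 ∈ DFsimplexTilde n)
    (hrec : ∀ s, 1 ≤ s → x (s + 1) = DFmap (fun _ : Fin n => (1 : ℝ) / n) (x s)) :
    Filter.Tendsto x Filter.atTop (nhds (fun _ : Fin n => (1 : ℝ) / n)) := by
  have hcard : 3 ≤ Fintype.card (Fin n) := by rwa [Fintype.card_fin]
  have : Nontrivial (Fin n) := Fin.nontrivial_iff_two_le.mpr (by omega)
  have hc : (1 : ℝ) / n ≠ 0 := one_div_ne_zero (Nat.cast_ne_zero.mpr (by omega))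
  have ht : ∀ i, 0 < invOneSub (x 1) i := invOneSub_pos hx1.2
  have horbit :
      ∀ k, x (k + 2) = normalizeSum ((invOneSub ∘ normalizeSum)^[k] (invOneSub (x 1))) := by
    intro k
    induction k with
    | zero => rw [hrec 1 le_rfl, DFmap_const_eq hc hx1.2]; rfl
    | succ k ih =>
      rw [hrec (k + 2) (by omega), ih,
        DFmap_const_eq hc (normalizeSum_lt_one (iterate_invOneSub_normalizeSum_pos ht k)),
        Function.iterate_succ_apply']
      rfl
  have hlim := tendsto_normalizeSum_iterate hcard ht
  rw [Fintype.card_fin, ← funext horbit] at hlim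
  exact (tendsto_add_atTop_iff_nat 2).mp hlim
end
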